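/- For each fixed ξ ∈ ℝ, (1/n²)·1_{[−πn,πn]}(ξ')·(1 − cos(ξ'))/(1 − cos(ξ'/n)) → 2(1 − cos(ξ'))/ξ'² as n → ∞ pointwise in ξ' ≠ 0, and the left-hand side is bounded uniformly in n by an integrable envelope (up to a bounded factor), so that for any continuous integrable φ: ℝ → ℝ, (1/n²) ∫_{−πn}^{πn} (1 − cos(ξ'))/(1 − cos(ξ'/n)) · φ(ξ'/(2πnτ) + k/τ) dξ' → 2π·φ(k/τ) as n → ∞. -/

import Mathlib

open MeasureTheory Real Filter

lemma ae_ne_zero : ∀ᵐ t : ℝ, t ≠ 0 := by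
  rw [ae_iff]
  have : {t : ℝ | ¬ t ≠ 0} = {0} := by ext t; simp
  rw [this]
  exact Real.volume_singleton


lemma sin_div_lim : Tendsto (fun y : ℝ => Real.sin y / y) (nhdsWithin 0 {0}ᶜ) (nhds 1) := by
  have h := Real.hasDerivAt_sin 0
  rw [hasDerivAt_iff_tendsto_slope] at h
  simpa [slope_fun_def_field, Real.cos_zero] using h

lemma lemA (ξ : ℝ) (hξ : ξ ≠ 0) :
    Tendsto (fun n : ℕ => (1/(n:ℝ)^2) * ((1 - Real.cos ξ)/(1 - Real.cos (ξ / n))))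
      atTop (nhds (2 * (1 - Real.cos ξ) / ξ^2)) := by
  have h1 : Tendsto (fun n : ℕ => ξ/(2*n)) atTop (nhdsWithin 0 {0}ᶜ) := by
    rw [tendsto_nhdsWithin_iff]
    constructor
    · have h := tendsto_one_div_atTop_nhds_zero_nat.const_mul (ξ/2)
      rw [mul_zero] at h
      refine h.congr fun n => by ring
    · filter_upwards [eventually_ge_atTop 1] with n hn
      have hn0 : (n:ℝ) ≠ 0 := Nat.cast_ne_zero.2 (by omega)
      simp only [Set.mem_compl_iff, Set.mem_singleton_iff]
      positivity
  have h2 : Tendsto (fun n : ℕ => Real.sin (ξ/(2*n)) / (ξ/(2*n))) atTop (nhds 1) :=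
    sin_div_lim.comp h1
  have h3 : Tendsto (fun n : ℕ => (n:ℝ) * Real.sin (ξ/(2*n))) atTop (nhds (ξ/2)) := by
    have h := h2.const_mul (ξ/2)
    rw [mul_one] at h
    refine h.congr' ?_
    filter_upwards [eventually_ge_atTop 1] with n hn
    have hn0 : (n:ℝ) ≠ 0 := Nat.cast_ne_zero.2 (by omega)
    field_simp
  have h4 : Tendsto (fun n : ℕ => (n:ℝ)^2 * (1 - Real.cos (ξ/n))) atTop (nhds (ξ^2/2)) := by
    have h := ((h3.mul h3).const_mul 2)
    refine Tendsto.congr' ?_ (by convert h using 1; ring)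
    filter_upwards [eventually_ge_atTop 1] with n hn
    have hn0 : (n:ℝ) ≠ 0 := Nat.cast_ne_zero.2 (by omega)
    have hs : Real.sin (ξ/(2*n)) ^ 2 = 1/2 - Real.cos (2 * (ξ/(2*n)))/2 := Real.sin_sq_eq_half_sub _
    have h2n : 2 * (ξ/(2*(n:ℝ))) = ξ/n := by field_simp
    rw [h2n] at hs
    nlinarith [hs]
  have hne : (ξ^2/2 : ℝ) ≠ 0 := by positivity
  have h5 := tendsto_const_nhds (x := (1 - Real.cos ξ)) (f := atTop (α := ℕ)) |>.mul (h4.inv₀ hne)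
  have hval : (1 - Real.cos ξ) * (ξ^2/2)⁻¹ = 2 * (1 - Real.cos ξ) / ξ^2 := by
    field_simp
  rw [hval] at h5
  refine h5.congr fun n => ?_
  rw [mul_inv]
  ring


lemma lemB {n : ℕ} (hn : 1 ≤ n) {ξ : ℝ} (hξ : ξ ∈ Set.Icc (-(π*n)) (π*n)) :
    0 ≤ (1/(n:ℝ)^2) * ((1 - Real.cos ξ)/(1 - Real.cos (ξ/n))) ∧
    (1/(n:ℝ)^2) * ((1 - Real.cos ξ)/(1 - Real.cos (ξ/n))) ≤ 2*π^2*(1+ξ^2)⁻¹ := by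
  have hn0 : (0:ℝ) < n := by exact_mod_cast Nat.pos_of_ne_zero (by omega)
  have hnonneg : 0 ≤ (1/(n:ℝ)^2) * ((1 - Real.cos ξ)/(1 - Real.cos (ξ/n))) :=
    mul_nonneg (by positivity)
      (div_nonneg (by linarith [Real.cos_le_one ξ]) (by linarith [Real.cos_le_one (ξ/n)]))
  refine ⟨hnonneg, ?_⟩
  rcases eq_or_ne ξ 0 with rfl | hξ0
  · simp only [zero_div, Real.cos_zero, sub_self, div_zero, mul_zero]
    positivity
  · have habs : |ξ/n| ≤ π := by
      rw [abs_div, abs_of_pos hn0, div_le_iff₀ hn0]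
      rw [Set.mem_Icc] at hξ
      rw [abs_le]; constructor <;> nlinarith [hξ.1, hξ.2]
    have hlow : 2/π^2 * (ξ/n)^2 ≤ 1 - Real.cos (ξ/n) := by
      have := Real.cos_le_one_sub_mul_cos_sq habs
      linarith
    have hξn : ξ/(n:ℝ) ≠ 0 := div_ne_zero hξ0 (ne_of_gt hn0)
    have hpos : (0:ℝ) < 2/π^2 * (ξ/n)^2 := by positivity
    have hq : 1 - Real.cos ξ ≤ ξ^2/2 := by
      have := Real.one_sub_sq_div_two_le_cos (x := ξ)
      linarith
    have hq2 : 1 - Real.cos ξ ≤ 2 := by nlinarith [Real.neg_one_le_cos ξ]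
    have h1 : (1/(n:ℝ)^2) * ((1 - Real.cos ξ)/(1 - Real.cos (ξ/n)))
        ≤ (1/(n:ℝ)^2) * ((1 - Real.cos ξ)/(2/π^2 * (ξ/n)^2)) := by
      apply mul_le_mul_of_nonneg_left _ (by positivity)
      apply div_le_div_of_nonneg_left _ hpos hlow
      linarith [Real.cos_le_one ξ]
    have h2 : (1/(n:ℝ)^2) * ((1 - Real.cos ξ)/(2/π^2 * (ξ/n)^2))
        = π^2 * (1 - Real.cos ξ) / (2*ξ^2) := by
      field_simp
    have h3 : π^2 * (1 - Real.cos ξ) / (2*ξ^2) ≤ 2*π^2*(1+ξ^2)⁻¹ := by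
      rw [inv_eq_one_div, mul_one_div, div_le_div_iff₀ (by positivity) (by positivity)]
      nlinarith [mul_le_mul_of_nonneg_left hq (sq_nonneg π),
        mul_le_mul_of_nonneg_right (mul_le_mul_of_nonneg_left hq2 (sq_nonneg π)) (sq_nonneg ξ),
        mul_nonneg (sq_nonneg π) (sq_nonneg ξ)]
    linarith [h1, h2.le, h2.ge, h3]


lemma dirichlet_id (t : ℝ) (m : ℕ) :
    (1 - Real.cos t) * (1 + 2 * ∑ i ∈ Finset.range m, Real.cos (((i:ℝ)+1) * t))
      = Real.cos ((m:ℝ) * t) - Real.cos (((m:ℝ)+1) * t) := by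
  induction m with
  | zero => simp
  | succ m ih =>
    rw [Finset.sum_range_succ]
    push_cast
    have h1 : Real.cos (((m:ℝ)+1+1) * t) = Real.cos (((m:ℝ)+1)*t) * Real.cos t - Real.sin (((m:ℝ)+1)*t) * Real.sin t := by
      rw [← Real.cos_add]; ring_nf
    have h2 : Real.cos (((m:ℝ)+1) * t) = Real.cos ((m:ℝ)*t) * Real.cos t - Real.sin ((m:ℝ)*t) * Real.sin t := by
      rw [← Real.cos_add]; ring_nf
    have h3 : Real.sin (((m:ℝ)+1) * t) = Real.sin ((m:ℝ)*t) * Real.cos t + Real.cos ((m:ℝ)*t) * Real.sin t := by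
      rw [← Real.sin_add]; ring_nf
    have h4 := Real.sin_sq_add_cos_sq t
    linear_combination ih + h1 - Real.cos t * h2 - Real.sin t * h3 - Real.cos ((m:ℝ)*t) * h4

noncomputable def Kf (n : ℕ) (t : ℝ) : ℝ :=
  ∑ m ∈ Finset.range n, (1 + 2 * ∑ i ∈ Finset.range m, Real.cos (((i:ℝ)+1) * t))

lemma Kf_id (n : ℕ) (t : ℝ) : (1 - Real.cos t) * Kf n t = 1 - Real.cos ((n:ℝ) * t) := by
  unfold Kf
  rw [Finset.mul_sum]
  rw [Finset.sum_congr rfl fun m _ => dirichlet_id t m]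
  have := Finset.sum_range_sub' (f := fun m : ℕ => Real.cos ((m:ℝ) * t)) n
  simp only [Nat.cast_add, Nat.cast_one] at this
  rw [this]
  simp



lemma Kf_cont (n : ℕ) : Continuous (Kf n) := by
  unfold Kf
  refine continuous_finset_sum _ fun m _ => ?_
  refine continuous_const.add (continuous_const.mul (continuous_finset_sum _ fun i _ => ?_))
  exact Real.continuous_cos.comp (continuous_const.mul continuous_id)

lemma int_cos_mul (c : ℕ) (hc : 1 ≤ c) : ∫ t in (-π)..π, Real.cos ((c:ℝ) * t) = 0 := by
  have hc0 : (c:ℝ) ≠ 0 := Nat.cast_ne_zero.2 (by omega)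
  rw [intervalIntegral.integral_comp_mul_left (fun x => Real.cos x) hc0]
  rw [integral_cos]
  rw [mul_neg, Real.sin_neg, Real.sin_nat_mul_pi]
  simp

lemma intKf (n : ℕ) : ∫ t in (-π)..π, Kf n t = 2*π*n := by
  unfold Kf
  rw [intervalIntegral.integral_finset_sum]
  · have key : ∀ m ∈ Finset.range n,
        (∫ t in (-π)..π, (1 + 2 * ∑ i ∈ Finset.range m, Real.cos (((i:ℝ)+1) * t))) = 2*π := by
      intro m _
      rw [intervalIntegral.integral_add intervalIntegrable_const]
      · rw [intervalIntegral.integral_const_mul, intervalIntegral.integral_finset_sum]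
        · have : ∀ i ∈ Finset.range m, (∫ t in (-π)..π, Real.cos (((i:ℝ)+1) * t)) = 0 := by
            intro i _
            have := int_cos_mul (i+1) (by omega)
            push_cast at this
            exact this
          rw [Finset.sum_congr rfl this]
          simp; ring
        · intro i _
          exact (Real.continuous_cos.comp (continuous_const.mul continuous_id)).intervalIntegrable _ _
      · apply IntervalIntegrable.const_mul
        apply ContinuousOn.intervalIntegrable
        exact (continuous_finset_sum _ fun i _ =>
          Real.continuous_cos.comp (continuous_const.mul continuous_id)).continuousOn
    rw [Finset.sum_congr rfl key]
    simp [mul_comm]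
  · intro m _
    apply ContinuousOn.intervalIntegrable
    exact (continuous_const.add (continuous_const.mul (continuous_finset_sum _ fun i _ =>
      Real.continuous_cos.comp (continuous_const.mul continuous_id)))).continuousOn



lemma fejer_int (n : ℕ) :
    ∫ t in Set.Icc (-π) π, (1 - Real.cos ((n:ℝ)*t))/(1 - Real.cos t) = 2*π*n := by
  have heq : ∫ t in Set.Icc (-π) π, (1 - Real.cos ((n:ℝ)*t))/(1 - Real.cos t)
      = ∫ t in Set.Icc (-π) π, Kf n t := by
    refine setIntegral_congr_ae measurableSet_Icc ?_
    filter_upwards [ae_ne_zero] with t ht hmem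
    rw [Set.mem_Icc] at hmem
    have hcos : Real.cos t ≠ 1 := by
      intro h
      have := (Real.cos_eq_one_iff_of_lt_of_lt (x := t)
        (by nlinarith [Real.pi_pos, hmem.1]) (by nlinarith [Real.pi_pos, hmem.2])).1 h
      exact ht this
    rw [div_eq_iff (by intro h; apply hcos; linarith [sub_eq_zero.1 h])]
    rw [← Kf_id n t]; ring
  rw [heq, integral_Icc_eq_integral_Ioc,
    ← intervalIntegral.integral_of_le (by linarith [Real.pi_pos]), intKf]

lemma kernel_int (n : ℕ) (hn : 1 ≤ n) :
    (1/(n:ℝ)^2) * ∫ ξ in Set.Icc (-(π*n)) (π*n), (1 - Real.cos ξ)/(1 - Real.cos (ξ/n)) = 2*π := by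
  have hn0 : (0:ℝ) < n := by exact_mod_cast Nat.pos_of_ne_zero (by omega)
  have hle : -(π*(n:ℝ)) ≤ π*n := by nlinarith [Real.pi_pos]
  have h2 := intervalIntegral.integral_comp_mul_left
    (a := -π) (b := π) (c := (n:ℝ))
    (f := fun ξ => (1 - Real.cos ξ)/(1 - Real.cos (ξ/n))) (ne_of_gt hn0)
  have harg : ∀ t : ℝ, ((n:ℝ)*t)/(n:ℝ) = t := fun t => by field_simp
  simp only [harg] at h2
  -- h2 : ∫ t in -π..π, (1 - cos (n*t))/(1 - cos t) = n⁻¹ • ∫ x in n*(-π)..n*π, f x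
  have h3 : ∫ t in (-π)..π, (1 - Real.cos ((n:ℝ)*t))/(1 - Real.cos t) = 2*π*n := by
    rw [intervalIntegral.integral_of_le (by linarith [Real.pi_pos]),
      ← integral_Icc_eq_integral_Ioc]
    exact fejer_int n
  rw [h3] at h2
  have h4 : ∫ ξ in Set.Icc (-(π*n)) (π*n), (1 - Real.cos ξ)/(1 - Real.cos (ξ/n))
      = ∫ ξ in ((n:ℝ)*(-π))..((n:ℝ)*π), (1 - Real.cos ξ)/(1 - Real.cos (ξ/n)) := by
    rw [intervalIntegral.integral_of_le (by nlinarith [Real.pi_pos]),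
      ← integral_Icc_eq_integral_Ioc]
    congr 1 <;> ring
  have h5 : ∫ ξ in ((n:ℝ)*(-π))..((n:ℝ)*π), (1 - Real.cos ξ)/(1 - Real.cos (ξ/n))
      = (n:ℝ) * (2*π*(n:ℝ)) := by
    rw [h2, smul_eq_mul, ← mul_assoc, mul_inv_cancel₀ (ne_of_gt hn0), one_mul]
  rw [h4, h5]
  field_simp



lemma dct_main (ψ : ℕ → ℝ → ℝ) (L C : ℝ) (hC : 0 ≤ C) (hb : ∀ n ξ, |ψ n ξ| ≤ C)
    (hm : ∀ n : ℕ, Measurable (ψ n)) (hlim : ∀ ξ : ℝ, Tendsto (fun n => ψ n ξ) atTop (nhds L)) :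
    Tendsto (fun n : ℕ => ∫ ξ, Set.indicator (Set.Icc (-(π*(n:ℕ))) (π*n))
        (fun ξ => (1/(n:ℝ)^2) * ((1 - Real.cos ξ)/(1 - Real.cos (ξ/n)) * ψ n ξ)) ξ)
      atTop (nhds (∫ ξ : ℝ, 2*(1 - Real.cos ξ)/ξ^2 * L)) := by
  set F : ℕ → ℝ → ℝ := fun n => Set.indicator (Set.Icc (-(π*(n:ℕ))) (π*n))
        (fun ξ => (1/(n:ℝ)^2) * ((1 - Real.cos ξ)/(1 - Real.cos (ξ/n)) * ψ n ξ)) with hF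
  have hmeas : ∀ n : ℕ, AEStronglyMeasurable (F n) volume := by
    intro n
    refine (Measurable.indicator ?_ measurableSet_Icc).aestronglyMeasurable
    exact measurable_const.mul
      ((((measurable_const.sub ((Real.continuous_cos).measurable)).div
        (measurable_const.sub (Real.continuous_cos.measurable.comp (measurable_id.div_const _)))).mul (hm n)))
  have hbound : ∀ n : ℕ, ∀ᵐ ξ : ℝ, ‖F n ξ‖ ≤ C * (2*π^2*(1+ξ^2)⁻¹) := by
    intro n
    refine Eventually.of_forall fun ξ => ?_
    have hbnd0 : (0:ℝ) ≤ C * (2*π^2*(1+ξ^2)⁻¹) := by positivity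
    rcases Nat.eq_zero_or_pos n with rfl | hn
    · simp only [hF]
      rcases Set.indicator_eq_zero_or_self _ (fun ξ => (1/((0:ℕ):ℝ)^2) * ((1 - Real.cos ξ)/(1 - Real.cos (ξ/(0:ℕ))) * ψ 0 ξ)) ξ with h | h <;>
        rw [h] <;> simp_all <;> positivity
    · rcases em (ξ ∈ Set.Icc (-(π*(n:ℕ))) (π*(n:ℕ))) with hmem | hmem
      · rw [hF]
        simp only [Set.indicator_of_mem hmem]
        obtain ⟨hpos, hle⟩ := lemB hn hmem
        rw [Real.norm_eq_abs, ← mul_assoc, abs_mul]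
        have e1 : |1/(n:ℝ)^2 * ((1 - Real.cos ξ)/(1 - Real.cos (ξ/n)))|
            = 1/(n:ℝ)^2 * ((1 - Real.cos ξ)/(1 - Real.cos (ξ/n))) := abs_of_nonneg hpos
        rw [e1]
        calc (1/(n:ℝ)^2 * ((1 - Real.cos ξ)/(1 - Real.cos (ξ/n)))) * |ψ n ξ|
            ≤ (2*π^2*(1+ξ^2)⁻¹) * C := by
              apply mul_le_mul hle (hb n ξ) (abs_nonneg _) (by positivity)
          _ = C * (2*π^2*(1+ξ^2)⁻¹) := by ring
      · rw [hF]
        simp only [Set.indicator_of_notMem hmem, norm_zero]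
        exact hbnd0
  have hint : Integrable (fun ξ : ℝ => C * (2*π^2*(1+ξ^2)⁻¹)) volume := by
    have := integrable_inv_one_add_sq
    exact ((this.const_mul (2*π^2)).const_mul C)
  have hlimF : ∀ᵐ ξ : ℝ, Tendsto (fun n => F n ξ) atTop (nhds (2*(1 - Real.cos ξ)/ξ^2 * L)) := by
    filter_upwards [ae_ne_zero] with ξ hξ
    have hmain := (lemA ξ hξ).mul (hlim ξ)
    refine Tendsto.congr' ?_ hmain
    filter_upwards [eventually_ge_atTop (max 1 ⌈|ξ|⌉₊)] with n hn
    have hn1 : 1 ≤ n := le_trans (le_max_left _ _) hn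
    have hxn : |ξ| ≤ (n:ℝ) := by
      calc |ξ| ≤ (⌈|ξ|⌉₊ : ℝ) := Nat.le_ceil _
        _ ≤ (n:ℝ) := by exact_mod_cast le_trans (le_max_right _ _) hn
    have hpi : (1:ℝ) ≤ π := by linarith [Real.pi_gt_three]
    have hmem : ξ ∈ Set.Icc (-(π*(n:ℕ))) (π*(n:ℕ)) := by
      rw [Set.mem_Icc]
      have hnn : (0:ℝ) ≤ (n:ℝ) := Nat.cast_nonneg n
      have : (n:ℝ) ≤ π * n := by nlinarith
      rw [abs_le] at hxn
      constructor <;> nlinarith [hxn.1, hxn.2]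
    rw [hF]
    simp only [Set.indicator_of_mem hmem]
    ring
  exact tendsto_integral_of_dominated_convergence _ hmeas hint hbound hlimF


/-- the Fejér-type kernels (1/n²)·1_{[−πn,πn]}(ξ')·(1−cos ξ')/(1−cos(ξ'/n))
converge pointwise (ξ' ≠ 0) to 2(1−cos ξ')/ξ'², and for any bounded continuous integrable φ,
(1/n²)∫_{−πn}^{πn} (1−cos ξ')/(1−cos(ξ'/n)) φ(ξ'/(2πnτ) + k/τ) dξ' → 2π φ(k/τ). -/
theorem stmt17 (τ : ℝ) (hτ : 0 < τ) (k : ℤ) (φ : ℝ → ℝ)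
    (hφc : Continuous φ) (hφi : Integrable φ volume) (hφb : ∃ C : ℝ, ∀ x, |φ x| ≤ C) :
    (∀ ξ' : ℝ, ξ' ≠ 0 →
      Tendsto (fun n : ℕ =>
          (1 / (n : ℝ) ^ 2) *
            Set.indicator (Set.Icc (-(π * n)) (π * n)) (fun _ => (1:ℝ)) ξ' *
              ((1 - Real.cos ξ') / (1 - Real.cos (ξ' / n))))
        atTop (nhds (2 * (1 - Real.cos ξ') / ξ' ^ 2))) ∧
    Tendsto (fun n : ℕ =>
        (1 / (n : ℝ) ^ 2) *
          ∫ ξ' in Set.Icc (-(π * n)) (π * n),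
            (1 - Real.cos ξ') / (1 - Real.cos (ξ' / n)) *
              φ (ξ' / (2 * π * n * τ) + (k : ℝ) / τ))
      atTop (nhds (2 * π * φ ((k : ℝ) / τ))) := by
  have hpi : (1:ℝ) ≤ π := by linarith [Real.pi_gt_three]
  constructor
  · -- part 1
    intro ξ hξ
    refine Tendsto.congr' ?_ (lemA ξ hξ)
    filter_upwards [eventually_ge_atTop (max 1 ⌈|ξ|⌉₊)] with n hn
    have hxn : |ξ| ≤ (n:ℝ) := by
      calc |ξ| ≤ (⌈|ξ|⌉₊ : ℝ) := Nat.le_ceil _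
        _ ≤ (n:ℝ) := by exact_mod_cast le_trans (le_max_right _ _) hn
    have hmem : ξ ∈ Set.Icc (-(π*(n:ℕ))) (π*(n:ℕ)) := by
      rw [Set.mem_Icc]
      have hnn : (0:ℝ) ≤ (n:ℝ) := Nat.cast_nonneg n
      rw [abs_le] at hxn
      constructor <;> nlinarith [hxn.1, hxn.2]
    rw [Set.indicator_of_mem hmem, mul_one]
  · -- part 2
    obtain ⟨C, hC⟩ := hφb
    have hC0 : 0 ≤ C := le_trans (abs_nonneg _) (hC 0)
    set ψ : ℕ → ℝ → ℝ := fun n ξ => φ (ξ / (2 * π * n * τ) + (k : ℝ) / τ) with hψ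
    have hm : ∀ n : ℕ, Measurable (ψ n) :=
      fun n => hφc.measurable.comp ((measurable_id.div_const _).add_const _)
    have hlim : ∀ ξ : ℝ, Tendsto (fun n => ψ n ξ) atTop (nhds (φ ((k:ℝ)/τ))) := by
      intro ξ
      have harg : Tendsto (fun n : ℕ => ξ / (2 * π * n * τ) + (k : ℝ) / τ) atTop
          (nhds (0 + (k:ℝ)/τ)) := by
        refine Tendsto.add ?_ tendsto_const_nhds
        have h := tendsto_one_div_atTop_nhds_zero_nat.const_mul (ξ/(2*π*τ))
        rw [mul_zero] at h
        refine h.congr fun n => ?_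
        field_simp
      have := (hφc.tendsto (0 + (k:ℝ)/τ)).comp harg
      rw [zero_add] at this
      exact this
    have hdct := dct_main ψ (φ ((k:ℝ)/τ)) C hC0 (fun n ξ => hC _) hm hlim
    have hdct1 := dct_main (fun _ _ => (1:ℝ)) 1 1 zero_le_one (fun n ξ => by norm_num)
      (fun n => measurable_const) (fun ξ => tendsto_const_nhds)
    -- identify the constant ∫ 2(1-cos ξ)/ξ² * 1 = 2π
    have hval : (∫ ξ : ℝ, 2*(1 - Real.cos ξ)/ξ^2 * (1:ℝ)) = 2*π := by
      refine tendsto_nhds_unique hdct1 ?_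
      refine Tendsto.congr' ?_ (tendsto_const_nhds (x := 2*π) (f := (atTop : Filter ℕ)))
      filter_upwards [eventually_ge_atTop 1] with n hn
      symm
      rw [integral_indicator measurableSet_Icc]
      rw [show (fun ξ : ℝ => (1/(n:ℝ)^2) * ((1 - Real.cos ξ)/(1 - Real.cos (ξ/n)) * 1))
          = (fun ξ : ℝ => (1/(n:ℝ)^2) * ((1 - Real.cos ξ)/(1 - Real.cos (ξ/n)))) by
        funext ξ; rw [mul_one]]
      rw [integral_const_mul]
      exact kernel_int n hn
    have hseq : (fun n : ℕ =>
        (1 / (n : ℝ) ^ 2) *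
          ∫ ξ' in Set.Icc (-(π * n)) (π * n),
            (1 - Real.cos ξ') / (1 - Real.cos (ξ' / n)) *
              φ (ξ' / (2 * π * n * τ) + (k : ℝ) / τ))
        = (fun n : ℕ => ∫ ξ, Set.indicator (Set.Icc (-(π*(n:ℕ))) (π*n))
            (fun ξ => (1/(n:ℝ)^2) * ((1 - Real.cos ξ)/(1 - Real.cos (ξ/n)) * ψ n ξ)) ξ) := by
      funext n
      rw [integral_indicator measurableSet_Icc, integral_const_mul]
    rw [hseq]
    have hfinal : (∫ ξ : ℝ, 2*(1 - Real.cos ξ)/ξ^2 * φ ((k:ℝ)/τ)) = 2 * π * φ ((k:ℝ)/τ) := by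
      rw [integral_mul_const]
      have : (∫ ξ : ℝ, 2*(1 - Real.cos ξ)/ξ^2) = 2*π := by
        rw [← hval]
        congr 1
        funext ξ
        rw [mul_one]
      rw [this]
    rw [← hfinal]
    exact hdct
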